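/- Every admissible abstract simplex path is reducible: for every admissible path P of dimension n ≥ 3 there is a finite sequence of exhaustive vertex and edge expansions transforming P into a 0-path. -/
import Mathlib


/-- Data of an abstract simplex path of dimension `n`: the vertices (colors) of the
`n`-simplex are indexed by `Fin (n+1)`; `C` and `V` are indexed by positive naturals
(positions `1,…,k-1` are the relevant ones for a path of length `k`). -/
structure SPath (n : ℕ) where
  I : Fin (n + 1) → Bool
  C : ℕ → Fin (n + 1)
  V : ℕ → Bool

namespace SPath

variable {n : ℕ}

/-- The `j`-th simplex `R^j(P)` of the path, defined via the last-occurrence rule. -/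
def R (P : SPath n) (j : ℕ) (i : Fin (n + 1)) : Bool :=
  if h : ((Finset.Icc 1 (j - 1)).filter fun m => P.C m = i).Nonempty then
    P.V (((Finset.Icc 1 (j - 1)).filter fun m => P.C m = i).max' h)
  else P.I i

/-- The height `h_j(P)` of the `j`-th simplex: the number of `1`-entries. -/
def height (P : SPath n) (j : ℕ) : ℕ :=
  (Finset.univ.filter fun i : Fin (n + 1) => P.R j i = true).card

/-- The no-back-flip condition for a path of length `k`. -/
def NoBackFlip (P : SPath n) (k : ℕ) : Prop :=
  ∀ i, 1 ≤ i → i + 1 ≤ k - 1 → P.C i ≠ P.C (i + 1)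

/-- A boolean `[n]`-tuple is monochromatic. -/
def Mono (f : Fin (n + 1) → Bool) : Prop := ∃ b, ∀ i, f i = b

/-- `P` is an atomic path of length `k`. -/
def Atomic (P : SPath n) (k : ℕ) : Prop :=
  NoBackFlip P k ∧ Even k ∧ 2 ≤ k ∧
    (∀ i, P.R 1 i = false) ∧ (∀ i, P.R k i = false) ∧
    ∀ j, 1 < j → j < k → ¬Mono (P.R j)

/-- The subpath of `P` starting at position `a` (the subpath `P[a,b]` has length `b+1-a`). -/
def sub (P : SPath n) (a : ℕ) : SPath n :=
  ⟨fun i => P.R a i, fun m => P.C (a - 1 + m), fun m => P.V (a - 1 + m)⟩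

/-- `P` (of length `k`) is admissible: a concatenation of atomic paths. -/
def Admissible (P : SPath n) (k : ℕ) : Prop :=
  ∃ (r : ℕ) (a : ℕ → ℕ), 1 ≤ r ∧ a 0 = 0 ∧ a r = k ∧
    (∀ s, s < r → a s < a (s + 1)) ∧
    ∀ s, s < r → Atomic (P.sub (a s + 1)) (a (s + 1) - a s)

/-- A `0`-path of length `k`: zero initial simplex and all `V`-values `0`. -/
def IsZeroPath (P : SPath n) (k : ℕ) : Prop :=
  (∀ i, P.I i = false) ∧ ∀ j, 1 ≤ j → j + 1 ≤ k → P.V j = false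

end SPath

/-- Number of occurrences of `l` among `(Q a, …, Q b)`. -/
def cnt {n : ℕ} (Q : ℕ → Fin (n + 1)) (a b : ℕ) (l : Fin (n + 1)) : ℕ :=
  ((Finset.Icc a b).filter fun m => Q m = l).card

/-- The tuple `(Q 1, …, Q t)` describes an `[n]`-cube loop. -/
def IsCubeLoop {n : ℕ} (Q : ℕ → Fin (n + 1)) (t : ℕ) : Prop :=
  1 ≤ t ∧ (∀ l, Even (cnt Q 1 t l)) ∧
    ∀ i j, 1 ≤ i → i < j → j ≤ t → (i, j) ≠ (1, t) → ∃ l, ¬Even (cnt Q i j l)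

/-- The tuple `(Q 1, …, Q t)` together with the split `s` describes an `[n]`-cube `p`-path. -/
def IsCubePath {n : ℕ} (p : Fin (n + 1)) (Q : ℕ → Fin (n + 1)) (t s : ℕ) : Prop :=
  1 ≤ s ∧ s < t ∧ (∀ m, 1 ≤ m → m ≤ t → Q m ≠ p) ∧
    (∀ l, l ≠ p → Even (cnt Q 1 t l)) ∧
    (∀ i j, 1 ≤ i → i < j → j ≤ s → ∃ l, ¬Even (cnt Q i j l)) ∧
    ∀ i j, s + 1 ≤ i → i < j → j ≤ t → ∃ l, ¬Even (cnt Q i j l)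

namespace SPath

variable {n : ℕ}

/-- The labels `w_i` used in the vertex and edge expansions. -/
def w (P : SPath n) (m : ℕ) (D : Fin (n + 1) → Bool) (Q : ℕ → Fin (n + 1)) (i : ℕ) : Bool :=
  if Even (cnt Q 1 i (Q i)) then P.R m (Q i) else D (Q i)

/-- The vertex expansion `P(m, D, Q)` for a cube loop `Q` of length `t`. -/
def vexp (P : SPath n) (m : ℕ) (D : Fin (n + 1) → Bool) (Q : ℕ → Fin (n + 1)) (t : ℕ) :
    SPath n where
  I := P.I
  C := fun j =>
    if j ≤ m - 1 then P.C j
    else if j ≤ m + t - 3 then Q (j + 2 - m)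
    else P.C (j + 2 - t)
  V := fun j =>
    if j ≤ m - 2 then P.V j
    else if j ≤ m + t - 3 then P.w m D Q (j + 2 - m)
    else P.V (j + 2 - t)

/-- The edge expansion `P(m, D, Q, s)` for a cube path `Q` of length `t` with split `s`. -/
def eexp (P : SPath n) (m : ℕ) (D : Fin (n + 1) → Bool) (Q : ℕ → Fin (n + 1)) (t s : ℕ) :
    SPath n where
  I := P.I
  C := fun j =>
    if j ≤ m - 1 then P.C j
    else if j ≤ m + s - 2 then Q (j + 2 - m)
    else if j = m + s - 1 then P.C m
    else if j ≤ m + t - 2 then Q (j + 1 - m)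
    else P.C (j + 2 - t)
  V := fun j =>
    if j ≤ m - 2 then P.V j
    else if j ≤ m + s - 2 then P.w m D Q (j + 2 - m)
    else if j = m + s - 1 then P.V m
    else if j ≤ m + t - 2 then P.w m D Q (j + 1 - m)
    else P.V (j + 2 - t)

/-- Two cube vertices differ in exactly one coordinate. -/
def Adjacent (α β : Fin (n + 1) → Bool) : Prop := ∃! l, α l ≠ β l

/-- Membership in `M(A)` for the `2 × (n+1)` array with rows `A0` and `A1`. -/
def MemMA (A0 A1 : Fin (n + 1) → Bool) (α : Fin (n + 1) → Bool) : Prop :=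
  ∃ b, ∀ l, (if α l then A1 l else A0 l) = b

/-- The vertex expansion with data `(m, D, Q)` (loop length `t`) is exhaustive. -/
def ExhVertex (P : SPath n) (m t : ℕ) (D : Fin (n + 1) → Bool) (Q : ℕ → Fin (n + 1)) : Prop :=
  ∃ f : (Fin (n + 1) → Bool) → Fin (n + 1) → Bool,
    ∀ α, MemMA (P.R m) D α →
      (f α ≠ α → MemMA (P.R m) D (f α) ∧ f (f α) = α ∧ Adjacent α (f α)) ∧
      (f α = α → ∃ i, 1 ≤ i ∧ i ≤ t - 1 ∧
        ∀ j, α j = true ↔ ¬Even (cnt Q 1 i j))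

/-- The edge expansion with data `(m, D, Q, s)` (length `t`) is exhaustive. -/
def ExhEdge (P : SPath n) (m t s : ℕ) (D : Fin (n + 1) → Bool) (Q : ℕ → Fin (n + 1)) : Prop :=
  ∃ f : (Fin (n + 1) → Bool) → Fin (n + 1) → Bool,
    ∀ α, MemMA (P.R m) (fun l => if l = P.C m then P.V m else D l) α →
      (f α ≠ α →
        MemMA (P.R m) (fun l => if l = P.C m then P.V m else D l) (f α) ∧
          f (f α) = α ∧ Adjacent α (f α)) ∧
      (f α = α → ∃ i,
        ((α (P.C m) = false ∧ 1 ≤ i ∧ i ≤ s) ∨ (α (P.C m) = true ∧ s + 1 ≤ i ∧ i ≤ t)) ∧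
        ∀ j, j ≠ P.C m → (α j = true ↔ ¬Even (cnt Q 1 i j)))

/-- `(P', k')` is obtained from `(P, k)` by a finite sequence of exhaustive
vertex and edge expansions. -/
inductive Reduces : SPath n → ℕ → SPath n → ℕ → Prop where
  | refl (P : SPath n) (k : ℕ) : Reduces P k P k
  | vstep (P : SPath n) (k m t : ℕ) (D : Fin (n + 1) → Bool) (Q : ℕ → Fin (n + 1))
      (P' : SPath n) (k' : ℕ) :
      2 ≤ m → m + 1 ≤ k → IsCubeLoop Q t → Q 1 = P.C (m - 1) → Q t = P.C m →
      ExhVertex P m t D Q →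
      Reduces (P.vexp m D Q t) (k + t - 2) P' k' → Reduces P k P' k'
  | estep (P : SPath n) (k m t s : ℕ) (D : Fin (n + 1) → Bool) (Q : ℕ → Fin (n + 1))
      (P' : SPath n) (k' : ℕ) :
      2 ≤ m → m + 2 ≤ k → IsCubePath (P.C m) Q t s → Q 1 = P.C (m - 1) → Q t = P.C (m + 1) →
      ExhEdge P m t s D Q →
      Reduces (P.eexp m D Q t s) (k + t - 2) P' k' → Reduces P k P' k'

/-- `P` is reducible: some finite sequence of exhaustive vertex and edge
expansions transforms it into a `0`-path. -/
def Reducible (P : SPath n) (k : ℕ) : Prop :=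
  ∃ P' k', Reduces P k P' k' ∧ IsZeroPath P' k'

end SPath


namespace SPath

variable {n : ℕ}


lemma R_eq_of_last (P : SPath n) {j q0 : ℕ} {i : Fin (n+1)} (h1 : 1 ≤ q0) (h2 : q0 ≤ j - 1)
    (hc : P.C q0 = i) (hlast : ∀ q, q0 < q → q ≤ j - 1 → P.C q ≠ i) :
    P.R j i = P.V q0 := by
  unfold R
  have hq0mem : q0 ∈ (Finset.Icc 1 (j-1)).filter (fun m => P.C m = i) := by
    simp only [Finset.mem_filter, Finset.mem_Icc]; exact ⟨⟨h1, h2⟩, hc⟩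
  rw [dif_pos ⟨q0, hq0mem⟩]
  congr 1
  apply le_antisymm
  · apply Finset.max'_le
    intro q hq
    simp only [Finset.mem_filter, Finset.mem_Icc] at hq
    by_contra hlt
    push_neg at hlt
    exact hlast q hlt hq.1.2 hq.2
  · exact Finset.le_max' _ _ hq0mem

lemma R_eq_I (P : SPath n) {j : ℕ} {i : Fin (n+1)}
    (h : ∀ q, 1 ≤ q → q ≤ j - 1 → P.C q ≠ i) : P.R j i = P.I i := by
  unfold R
  rw [dif_neg]
  rintro ⟨q, hq⟩
  simp only [Finset.mem_filter, Finset.mem_Icc] at hq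
  exact h q hq.1.1 hq.1.2 hq.2

lemma R_elim (P : SPath n) (j : ℕ) (i : Fin (n+1)) :
    (P.R j i = P.I i ∧ ∀ q, 1 ≤ q → q ≤ j-1 → P.C q ≠ i) ∨
    (∃ q0, 1 ≤ q0 ∧ q0 ≤ j-1 ∧ P.C q0 = i ∧ P.R j i = P.V q0 ∧
      ∀ q, q0 < q → q ≤ j-1 → P.C q ≠ i) := by
  by_cases h : ((Finset.Icc 1 (j - 1)).filter fun m => P.C m = i).Nonempty
  · right
    set S := (Finset.Icc 1 (j - 1)).filter fun m => P.C m = i with hS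
    have hmem := S.max'_mem h
    simp only [hS, Finset.mem_filter, Finset.mem_Icc] at hmem
    refine ⟨S.max' h, hmem.1.1, hmem.1.2, hmem.2, ?_, ?_⟩
    · unfold R; rw [dif_pos h]
    · intro q hq1 hq2 hq3
      have : q ∈ S := by simp only [hS, Finset.mem_filter, Finset.mem_Icc]; exact ⟨⟨by omega, hq2⟩, hq3⟩
      have := Finset.le_max' S q this
      omega
  · left
    constructor
    · unfold R; rw [dif_neg h]
    · intro q hq1 hq2 hq3
      exact h ⟨q, by simp only [Finset.mem_filter, Finset.mem_Icc]; exact ⟨⟨hq1, hq2⟩, hq3⟩⟩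

lemma R_eq_R_of_no_occ (P : SPath n) {m j : ℕ} {i : Fin (n+1)} (hmj : m ≤ j)
    (h : ∀ q, m ≤ q → q ≤ j - 1 → P.C q ≠ i) : P.R j i = P.R m i := by
  unfold R
  have hset : (Finset.Icc 1 (j-1)).filter (fun q => P.C q = i)
      = (Finset.Icc 1 (m-1)).filter (fun q => P.C q = i) := by
    ext q
    simp only [Finset.mem_filter, Finset.mem_Icc]
    constructor
    · rintro ⟨⟨hq1, hq2⟩, hq3⟩
      refine ⟨⟨hq1, ?_⟩, hq3⟩
      by_contra hgt
      push_neg at hgt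
      exact h q (by omega) hq2 hq3
    · rintro ⟨⟨hq1, hq2⟩, hq3⟩
      exact ⟨⟨hq1, by omega⟩, hq3⟩
  rw [hset]

lemma R_eq_false (P : SPath n) {j : ℕ} {i : Fin (n+1)} (hI : P.I i = false)
    (h : ∀ q, 1 ≤ q → q ≤ j-1 → P.C q = i → P.V q = false) : P.R j i = false := by
  rcases R_elim P j i with ⟨h1, _⟩ | ⟨q0, hq1, hq2, hq3, hq4, _⟩
  · rw [h1, hI]
  · rw [hq4]; exact h q0 hq1 hq2 hq3


lemma cnt_single (Q : ℕ → Fin (n+1)) (a : ℕ) (l : Fin (n+1)) :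
    cnt Q a a l = if Q a = l then 1 else 0 := by
  unfold cnt
  rw [Finset.Icc_self]
  by_cases h : Q a = l
  · rw [if_pos h, Finset.filter_singleton, if_pos h, Finset.card_singleton]
  · rw [if_neg h, Finset.filter_singleton, if_neg h, Finset.card_empty]

lemma cnt_split (Q : ℕ → Fin (n+1)) (a b : ℕ) (l : Fin (n+1)) (h : a ≤ b + 1) :
    cnt Q a (b+1) l = cnt Q a b l + (if Q (b+1) = l then 1 else 0) := by
  unfold cnt
  rw [show Finset.Icc a (b+1) = insert (b+1) (Finset.Icc a b) by
    ext q; simp only [Finset.mem_Icc, Finset.mem_insert]; omega]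
  rw [Finset.filter_insert]
  by_cases hq : Q (b+1) = l
  · rw [if_pos hq, if_pos hq, Finset.card_insert_of_notMem]
    simp only [Finset.mem_filter, Finset.mem_Icc]
    omega
  · rw [if_neg hq, if_neg hq]; omega

lemma cnt_12 (Q : ℕ → Fin (n+1)) (l : Fin (n+1)) :
    cnt Q 1 2 l = (if Q 1 = l then 1 else 0) + (if Q 2 = l then 1 else 0) := by
  rw [show (2:ℕ) = 1 + 1 from rfl, cnt_split Q 1 1 l (by omega), cnt_single]

lemma cnt_13 (Q : ℕ → Fin (n+1)) (l : Fin (n+1)) :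
    cnt Q 1 3 l = (if Q 1 = l then 1 else 0) + (if Q 2 = l then 1 else 0)
      + (if Q 3 = l then 1 else 0) := by
  rw [show (3:ℕ) = 2 + 1 from rfl, cnt_split Q 1 2 l (by omega), cnt_12]

lemma cnt_14 (Q : ℕ → Fin (n+1)) (l : Fin (n+1)) :
    cnt Q 1 4 l = (if Q 1 = l then 1 else 0) + (if Q 2 = l then 1 else 0)
      + (if Q 3 = l then 1 else 0) + (if Q 4 = l then 1 else 0) := by
  rw [show (4:ℕ) = 3 + 1 from rfl, cnt_split Q 1 3 l (by omega), cnt_13]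

lemma cnt_34 (Q : ℕ → Fin (n+1)) (l : Fin (n+1)) :
    cnt Q 3 4 l = (if Q 3 = l then 1 else 0) + (if Q 4 = l then 1 else 0) := by
  rw [show (4:ℕ) = 3 + 1 from rfl, cnt_split Q 3 3 l (by omega), cnt_single]

/-- abba cube path: Q = (x, b, b, x), p avoided. -/
lemma isCubePath_abba (p x b : Fin (n+1)) (hxb : x ≠ b) (hxp : x ≠ p) (hbp : b ≠ p) :
    IsCubePath p (fun i => if i = 2 ∨ i = 3 then b else x) 4 2 := by
  set Q : ℕ → Fin (n+1) := fun i => if i = 2 ∨ i = 3 then b else x with hQ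
  have h1 : Q 1 = x := by simp [hQ]
  have h2 : Q 2 = b := by simp [hQ]
  have h3 : Q 3 = b := by simp [hQ]
  have h4 : Q 4 = x := by simp [hQ]
  refine ⟨by omega, by omega, ?_, ?_, ?_, ?_⟩
  · intro m hm1 hm4
    interval_cases m <;> simp only [h1, h2, h3, h4] <;> assumption
  · intro l hl
    rw [cnt_14, h1, h2, h3, h4]
    by_cases hx : x = l <;> by_cases hb : b = l <;>
      simp [hx, hb] <;> decide
  · intro i j hi hij hj
    obtain rfl : i = 1 := by omega
    obtain rfl : j = 2 := by omega
    refine ⟨x, ?_⟩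
    rw [cnt_12, h1, h2, if_pos rfl, if_neg (fun h => hxb h.symm)]
    decide
  · intro i j hi hij hj
    obtain rfl : i = 3 := by omega
    obtain rfl : j = 4 := by omega
    refine ⟨x, ?_⟩
    rw [cnt_34, h3, h4, if_pos rfl, if_neg (fun h => hxb h.symm)]
    decide

/-- abab cube path: Q = (x, z, x, z), p avoided. -/
lemma isCubePath_abab (p x z : Fin (n+1)) (hxz : x ≠ z) (hxp : x ≠ p) (hzp : z ≠ p) :
    IsCubePath p (fun i => if i = 2 ∨ i = 4 then z else x) 4 2 := by
  set Q : ℕ → Fin (n+1) := fun i => if i = 2 ∨ i = 4 then z else x with hQ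
  have h1 : Q 1 = x := by simp [hQ]
  have h2 : Q 2 = z := by simp [hQ]
  have h3 : Q 3 = x := by simp [hQ]
  have h4 : Q 4 = z := by simp [hQ]
  refine ⟨by omega, by omega, ?_, ?_, ?_, ?_⟩
  · intro m hm1 hm4
    interval_cases m <;> simp only [h1, h2, h3, h4] <;> assumption
  · intro l hl
    rw [cnt_14, h1, h2, h3, h4]
    by_cases hx : x = l <;> by_cases hz : z = l <;>
      simp [hx, hz] <;> decide
  · intro i j hi hij hj
    obtain rfl : i = 1 := by omega
    obtain rfl : j = 2 := by omega
    refine ⟨x, ?_⟩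
    rw [cnt_12, h1, h2, if_pos rfl, if_neg (fun h => hxz h.symm)]
    decide
  · intro i j hi hij hj
    obtain rfl : i = 3 := by omega
    obtain rfl : j = 4 := by omega
    refine ⟨x, ?_⟩
    rw [cnt_34, h3, h4, if_pos rfl, if_neg (fun h => hxz h.symm)]
    decide

lemma exists_notin3 (hn : 3 ≤ n) (a b c : Fin (n+1)) : ∃ d : Fin (n+1), d ≠ a ∧ d ≠ b ∧ d ≠ c := by
  have hd : ∃ d : Fin (n+1), d ∉ ({a, b, c} : Finset (Fin (n+1))) := by
    by_contra h
    push_neg at h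
    have hsub : (Finset.univ : Finset (Fin (n+1))) ⊆ {a, b, c} := fun d _ => h d
    have hcard := Finset.card_le_card hsub
    have h3 : ({a, b, c} : Finset (Fin (n+1))).card ≤ 3 := by
      calc ({a, b, c} : Finset (Fin (n+1))).card
          ≤ (insert b {c} : Finset (Fin (n+1))).card + 1 := Finset.card_insert_le _ _
        _ ≤ ({c} : Finset (Fin (n+1))).card + 1 + 1 :=
            Nat.add_le_add_right (Finset.card_insert_le _ _) 1
        _ = 3 := by simp
    rw [Finset.card_univ, Fintype.card_fin] at hcard
    omega
  obtain ⟨d, hd⟩ := hd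
  simp only [Finset.mem_insert, Finset.mem_singleton, not_or] at hd
  exact ⟨d, hd.1, hd.2.1, hd.2.2⟩



lemma exhEdge_of_fix (P : SPath n) (m t s : ℕ) (D : Fin (n + 1) → Bool) (Q : ℕ → Fin (n + 1))
    (c : Fin (n+1)) (hc1 : c ≠ P.C m) (hc2 : D c = P.R m c) :
    ExhEdge P m t s D Q := by
  refine ⟨fun α => Function.update α c (!(α c)), fun α hα => ⟨?_, ?_⟩⟩
  · intro _
    dsimp only at *
    have hA : (if c = P.C m then P.V m else D c) = P.R m c := by rw [if_neg hc1, hc2]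
    refine ⟨?_, ?_, ?_⟩
    · obtain ⟨v, hv⟩ := hα
      refine ⟨v, fun l => ?_⟩
      dsimp only
      rcases eq_or_ne l c with rfl | hl
      · have h0 := hv l
        dsimp only at h0
        rw [hA] at h0 ⊢
        rw [Function.update_self, ite_self]
        rw [ite_self] at h0
        exact h0
      · rw [Function.update_of_ne hl]
        exact hv l
    · funext l
      rcases eq_or_ne l c with rfl | hl
      · simp
      · simp [Function.update_of_ne hl]
    · refine ⟨c, ?_, ?_⟩
      · show α c ≠ Function.update α c (!(α c)) c
        rw [Function.update_self]
        cases α c <;> simp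
      · intro l hl
        by_contra hlc
        rw [Function.update_of_ne hlc] at hl
        exact hl rfl
  · intro h
    dsimp only at h
    have := congrFun h c
    rw [Function.update_self] at this
    cases hαc : α c <;> rw [hαc] at this <;> simp at this

lemma w_odd (P : SPath n) (m : ℕ) (D : Fin (n + 1) → Bool) (Q : ℕ → Fin (n + 1)) (i : ℕ)
    (h : ¬ Even (cnt Q 1 i (Q i))) : P.w m D Q i = D (Q i) := by
  unfold w; rw [if_neg h]

lemma w_even (P : SPath n) (m : ℕ) (D : Fin (n + 1) → Bool) (Q : ℕ → Fin (n + 1)) (i : ℕ)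
    (h : Even (cnt Q 1 i (Q i))) : P.w m D Q i = P.R m (Q i) := by
  unfold w; rw [if_pos h]

section EexpChar

variable (P : SPath n) (m : ℕ) (D : Fin (n + 1) → Bool) (Q : ℕ → Fin (n + 1))

lemma eexp_C_low (hm : 2 ≤ m) {j : ℕ} (hj : j ≤ m - 1) :
    (P.eexp m D Q 4 2).C j = P.C j := by
  simp only [eexp]
  rw [if_pos hj]

lemma eexp_C_m (hm : 2 ≤ m) : (P.eexp m D Q 4 2).C m = Q 2 := by
  simp only [eexp]
  rw [if_neg (by omega), if_pos (by omega)]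
  congr 1
  omega

lemma eexp_C_m1 (hm : 2 ≤ m) : (P.eexp m D Q 4 2).C (m + 1) = P.C m := by
  simp only [eexp]
  rw [if_neg (by omega), if_neg (by omega), if_pos (by omega)]

lemma eexp_C_m2 (hm : 2 ≤ m) : (P.eexp m D Q 4 2).C (m + 2) = Q 3 := by
  simp only [eexp]
  rw [if_neg (by omega), if_neg (by omega), if_neg (by omega), if_pos (by omega)]
  congr 1
  omega

lemma eexp_C_high (hm : 2 ≤ m) {j : ℕ} (hj : m + 3 ≤ j) :
    (P.eexp m D Q 4 2).C j = P.C (j - 2) := by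
  simp only [eexp]
  rw [if_neg (by omega), if_neg (by omega), if_neg (by omega), if_neg (by omega)]
  all_goals (congr 1 <;> omega)

lemma eexp_V_low (hm : 2 ≤ m) {j : ℕ} (hj : j ≤ m - 2) :
    (P.eexp m D Q 4 2).V j = P.V j := by
  simp only [eexp]
  rw [if_pos hj]

lemma eexp_V_m1 (hm : 2 ≤ m) : (P.eexp m D Q 4 2).V (m - 1) = P.w m D Q 1 := by
  simp only [eexp]
  rw [if_neg (by omega), if_pos (by omega)]
  congr 1
  omega

lemma eexp_V_m (hm : 2 ≤ m) : (P.eexp m D Q 4 2).V m = P.w m D Q 2 := by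
  simp only [eexp]
  rw [if_neg (by omega), if_pos (by omega)]
  congr 1
  omega

lemma eexp_V_m1' (hm : 2 ≤ m) : (P.eexp m D Q 4 2).V (m + 1) = P.V m := by
  simp only [eexp]
  rw [if_neg (by omega), if_neg (by omega), if_pos (by omega)]

lemma eexp_V_m2 (hm : 2 ≤ m) : (P.eexp m D Q 4 2).V (m + 2) = P.w m D Q 3 := by
  simp only [eexp]
  rw [if_neg (by omega), if_neg (by omega), if_neg (by omega), if_pos (by omega)]
  congr 1
  omega

lemma eexp_V_high (hm : 2 ≤ m) {j : ℕ} (hj : m + 3 ≤ j) :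
    (P.eexp m D Q 4 2).V j = P.V (j - 2) := by
  simp only [eexp]
  rw [if_neg (by omega), if_neg (by omega), if_neg (by omega), if_neg (by omega)]
  all_goals (congr 1 <;> omega)

lemma eexp_I : (P.eexp m D Q 4 2).I = P.I := rfl

end EexpChar

/-- Extension relation: any reduction from `(P', k')` yields one from `(P, k)`. -/
def Ext (P : SPath n) (k : ℕ) (P' : SPath n) (k' : ℕ) : Prop :=
  ∀ Z z, Reduces P' k' Z z → Reduces P k Z z

lemma Ext.comp {P P' P'' : SPath n} {k k' k'' : ℕ} (h1 : Ext P k P' k') (h2 : Ext P' k' P'' k'') :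
    Ext P k P'' k'' := fun Z z h => h1 Z z (h2 Z z h)

/-- Abstract description of the common shape of our two elementary moves. -/
structure Step (P P' : SPath n) (m : ℕ) (q2 q3 : Fin (n+1)) : Prop where
  hC0 : ∀ j, j ≤ m-1 → P'.C j = P.C j
  hCm : P'.C m = q2
  hC1 : P'.C (m+1) = P.C m
  hC2 : P'.C (m+2) = q3
  hC3 : ∀ j, m+3 ≤ j → P'.C j = P.C (j-2)
  hV0 : ∀ j, j ≤ m-2 → P'.V j = P.V j
  hVm1 : P'.V (m-1) = false
  hVm : P'.V m = false
  hV1 : P'.V (m+1) = P.V m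
  hV2 : P'.V (m+2) = P.R m q3
  hV3 : ∀ j, m+3 ≤ j → P'.V j = P.V (j-2)
  hI : P'.I = P.I

/-- The `abba` edge expansion move: kills or relocates the value at `m-1`. -/
lemma abba_move (P : SPath n) (k m : ℕ) (b : Fin (n+1)) (hn : 3 ≤ n)
    (hm : 2 ≤ m) (hk : m + 2 ≤ k)
    (hpat : P.C (m+1) = P.C (m-1)) (hxy : P.C (m-1) ≠ P.C m)
    (hbx : b ≠ P.C (m-1)) (hby : b ≠ P.C m) :
    ∃ P', Step P P' m b b ∧ Ext P k P' (k+2) := by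
  set x := P.C (m-1) with hx
  set Q : ℕ → Fin (n+1) := fun i => if i = 2 ∨ i = 3 then b else x with hQ
  set D : Fin (n+1) → Bool := fun l => if l = x ∨ l = b then false else P.R m l with hD
  have hQ1 : Q 1 = x := by simp [hQ]
  have hQ2 : Q 2 = b := by simp [hQ]
  have hQ3 : Q 3 = b := by simp [hQ]
  have hQ4 : Q 4 = x := by simp [hQ]
  have hDx : D x = false := by simp [hD]
  have hDb : D b = false := by simp [hD]
  have hw1 : P.w m D Q 1 = false := by
    rw [w_odd, hQ1, hDx]
    rw [cnt_single, if_pos rfl]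
    decide
  have hw2 : P.w m D Q 2 = false := by
    rw [w_odd, hQ2, hDb]
    rw [cnt_12, hQ1, hQ2, if_pos rfl, if_neg (fun h : x = b => hbx h.symm)]
    decide
  have hw3 : P.w m D Q 3 = P.R m b := by
    rw [w_even, hQ3]
    rw [cnt_13, hQ1, hQ2, hQ3, if_neg (fun h : x = b => hbx h.symm), if_pos rfl]
    decide
  refine ⟨P.eexp m D Q 4 2, ⟨fun j hj => eexp_C_low P m D Q hm hj,
    by rw [eexp_C_m P m D Q hm, hQ2],
    eexp_C_m1 P m D Q hm,
    by rw [eexp_C_m2 P m D Q hm, hQ3],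
    fun j hj => eexp_C_high P m D Q hm hj,
    fun j hj => eexp_V_low P m D Q hm hj,
    by rw [eexp_V_m1 P m D Q hm, hw1],
    by rw [eexp_V_m P m D Q hm, hw2],
    eexp_V_m1' P m D Q hm,
    by rw [eexp_V_m2 P m D Q hm, hw3],
    fun j hj => eexp_V_high P m D Q hm hj,
    rfl⟩, ?_⟩
  intro Z z hred
  obtain ⟨c, hc1, hc2, hc3⟩ := exists_notin3 hn x b (P.C m)
  refine Reduces.estep P k m 4 2 D Q Z z hm hk ?_ hQ1 (by rw [hQ4, hx, hpat]) ?_ ?_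
  · exact isCubePath_abba (P.C m) x b (fun h => hbx h.symm) hxy hby
  · refine exhEdge_of_fix P m 4 2 D Q c hc3 ?_
    simp only [hD]
    rw [if_neg]
    push_neg
    exact ⟨hc1, hc2⟩
  · rw [show k + 4 - 2 = k + 2 by omega]
    exact hred

/-- The `abab` edge expansion move: pushes the value at `m-1` forward. -/
lemma push_move (P : SPath n) (k m : ℕ) (z : Fin (n+1)) (hn : 3 ≤ n)
    (hm : 2 ≤ m) (hk : m + 2 ≤ k)
    (hz : P.C (m+1) = z) (hzx : z ≠ P.C (m-1)) (hzy : z ≠ P.C m)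
    (hxy : P.C (m-1) ≠ P.C m) :
    ∃ P', Step P P' m z (P.C (m-1)) ∧ Ext P k P' (k+2) := by
  set x := P.C (m-1) with hx
  set Q : ℕ → Fin (n+1) := fun i => if i = 2 ∨ i = 4 then z else x with hQ
  set D : Fin (n+1) → Bool := fun l => if l = x ∨ l = z then false else P.R m l with hD
  have hQ1 : Q 1 = x := by simp [hQ]
  have hQ2 : Q 2 = z := by simp [hQ]
  have hQ3 : Q 3 = x := by simp [hQ]
  have hQ4 : Q 4 = z := by simp [hQ]
  have hDx : D x = false := by simp [hD]
  have hDz : D z = false := by simp [hD]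
  have hw1 : P.w m D Q 1 = false := by
    rw [w_odd, hQ1, hDx]
    rw [cnt_single, if_pos rfl]
    decide
  have hw2 : P.w m D Q 2 = false := by
    rw [w_odd, hQ2, hDz]
    rw [cnt_12, hQ1, hQ2, if_neg (fun h : x = z => hzx h.symm), if_pos rfl]
    decide
  have hw3 : P.w m D Q 3 = P.R m x := by
    rw [w_even, hQ3]
    rw [cnt_13, hQ1, hQ2, hQ3, if_neg (fun h : z = x => hzx h), if_pos rfl]
    decide
  refine ⟨P.eexp m D Q 4 2, ⟨fun j hj => eexp_C_low P m D Q hm hj,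
    by rw [eexp_C_m P m D Q hm, hQ2],
    eexp_C_m1 P m D Q hm,
    by rw [eexp_C_m2 P m D Q hm, hQ3],
    fun j hj => eexp_C_high P m D Q hm hj,
    fun j hj => eexp_V_low P m D Q hm hj,
    by rw [eexp_V_m1 P m D Q hm, hw1],
    by rw [eexp_V_m P m D Q hm, hw2],
    eexp_V_m1' P m D Q hm,
    by rw [eexp_V_m2 P m D Q hm, hw3],
    fun j hj => eexp_V_high P m D Q hm hj,
    rfl⟩, ?_⟩
  intro Z z' hred
  obtain ⟨c, hc1, hc2, hc3⟩ := exists_notin3 hn x z (P.C m)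
  refine Reduces.estep P k m 4 2 D Q Z z' hm hk ?_ hQ1 (by rw [hQ4, hz]) ?_ ?_
  · exact isCubePath_abab (P.C m) x z (fun h => hzx h.symm) hxy hzy
  · refine exhEdge_of_fix P m 4 2 D Q c hc3 ?_
    simp only [hD]
    rw [if_neg]
    push_neg
    exact ⟨hc1, hc2⟩
  · rw [show k + 4 - 2 = k + 2 by omega]
    exact hred

/-- The set of "tokens": positions carrying value `true`. -/
def Tok (P : SPath n) (k : ℕ) : Finset ℕ := (Finset.Icc 1 (k-1)).filter fun q => P.V q = true

/-- The state invariant maintained throughout the reduction. -/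
structure Good (P : SPath n) (k : ℕ) : Prop where
  hk : 2 ≤ k
  hI : ∀ i, P.I i = false
  hS : ∀ l, P.R k l = false
  hW : ∀ q, 1 ≤ q → q + 1 ≤ k - 1 → P.C q = P.C (q+1) → ∀ l, P.R (q+1) l = false
  hN : ∀ j, 2 ≤ j → j ≤ k - 1 → ∃ l, P.R j l = false

lemma Step.R_low {P P' : SPath n} {m : ℕ} {q2 q3 : Fin (n+1)} (S : Step P P' m q2 q3)
    (hm : 2 ≤ m) {j : ℕ} (hj : j ≤ m - 1) (l : Fin (n+1)) : P'.R j l = P.R j l := by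
  have hset : (Finset.Icc 1 (j-1)).filter (fun q => P'.C q = l)
      = (Finset.Icc 1 (j-1)).filter (fun q => P.C q = l) := by
    apply Finset.filter_congr
    intro q hq
    simp only [Finset.mem_Icc] at hq
    rw [S.hC0 q (by omega)]
  unfold R
  rw [hset]
  by_cases h : ((Finset.Icc 1 (j-1)).filter (fun q => P.C q = l)).Nonempty
  · rw [dif_pos h, dif_pos h]
    apply S.hV0
    have hmem := (Finset.mem_filter.mp (Finset.max'_mem _ h)).1
    simp only [Finset.mem_Icc] at hmem
    omega
  · rw [dif_neg h, dif_neg h, congrFun S.hI l]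

lemma Step.R_tail {P P' : SPath n} {m : ℕ} {q2 q3 : Fin (n+1)} (S : Step P P' m q2 q3)
    (hm : 2 ≤ m) (hIf : ∀ i, P.I i = false)
    (h3y : q3 ≠ P.C m) (h34 : q3 ≠ P.C (m+1)) :
    ∀ j l, m+1 ≤ j → P'.R (j+2) l = true → P.R j l = true := by
  intro j l hj h
  rcases R_elim P' (j+2) l with ⟨h1, _⟩ | ⟨q0, hq1, hq2, hqc, hqv, hqlast⟩
  · rw [h1, congrFun S.hI l, hIf l] at h
    exact absurd h (by simp)
  · have hq2' : q0 ≤ j + 1 := by omega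
    have hv : P'.V q0 = true := by rw [← hqv]; exact h
    by_cases hA : q0 ≤ m - 2
    · have hcold : P.C q0 = l := by rw [← S.hC0 q0 (by omega)]; exact hqc
      have hvold : P.V q0 = true := by rw [← S.hV0 q0 hA]; exact hv
      rw [R_eq_of_last P hq1 (show q0 ≤ j - 1 by omega) hcold ?_]
      · exact hvold
      intro q hq hq' hc
      by_cases h1 : q ≤ m - 1
      · exact hqlast q hq (by omega) (by rw [S.hC0 q h1]; exact hc)
      · by_cases h2 : q = m
        · exact hqlast (m+1) (by omega) (by omega) (by rw [S.hC1, ← h2]; exact hc)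
        · by_cases h3 : q = m+1
          · exact hqlast (m+3) (by omega) (by omega)
              (by rw [S.hC3 (m+3) (by omega), show m+3-2 = m+1 by omega, ← h3]; exact hc)
          · exact hqlast (q+2) (by omega) (by omega)
              (by rw [S.hC3 (q+2) (by omega), show q+2-2 = q by omega]; exact hc)
    · by_cases hB : q0 = m - 1
      · rw [hB, S.hVm1] at hv; exact absurd hv (by simp)
      · by_cases hC : q0 = m
        · rw [hC, S.hVm] at hv; exact absurd hv (by simp)
        · by_cases hD : q0 = m+1
          · have hl : P.C m = l := by rw [← S.hC1, ← hD]; exact hqc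
            have hvm : P.V m = true := by rw [← S.hV1, ← hD]; exact hv
            rw [R_eq_of_last P (show 1 ≤ m by omega) (show m ≤ j-1 by omega) hl ?_]
            · exact hvm
            intro q hq hq' hc
            by_cases h3 : q = m+1
            · exact hqlast (m+3) (by omega) (by omega)
                (by rw [S.hC3 (m+3) (by omega), show m+3-2 = m+1 by omega, ← h3]; exact hc)
            · exact hqlast (q+2) (by omega) (by omega)
                (by rw [S.hC3 (q+2) (by omega), show q+2-2 = q by omega]; exact hc)
          · by_cases hE : q0 = m+2
            · have hl : q3 = l := by rw [← S.hC2, ← hE]; exact hqc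
              have hRm : P.R m q3 = true := by rw [← S.hV2, ← hE]; exact hv
              subst hl
              rw [R_eq_R_of_no_occ P (show m ≤ j by omega) ?_]
              · exact hRm
              intro q hq hq' hc
              by_cases h1 : q = m
              · exact h3y (by rw [← hc, h1])
              · by_cases h2 : q = m+1
                · exact h34 (by rw [← hc, h2])
                · exact hqlast (q+2) (by omega) (by omega)
                    (by rw [S.hC3 (q+2) (by omega), show q+2-2 = q by omega]; exact hc)
            · have hq0 : m+3 ≤ q0 := by omega
              have hcold : P.C (q0-2) = l := by rw [← S.hC3 q0 hq0]; exact hqc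
              have hvold : P.V (q0-2) = true := by rw [← S.hV3 q0 hq0]; exact hv
              rw [R_eq_of_last P (show 1 ≤ q0-2 by omega) (show q0-2 ≤ j-1 by omega) hcold ?_]
              · exact hvold
              intro q hq hq' hc
              exact hqlast (q+2) (by omega) (by omega)
                (by rw [S.hC3 (q+2) (by omega), show q+2-2 = q by omega]; exact hc)

lemma step_good {P P' : SPath n} {k m : ℕ} {q2 q3 : Fin (n+1)} (S : Step P P' m q2 q3)
    (hG : Good P k) (hm : 2 ≤ m) (hk : m + 2 ≤ k)
    (h2x : q2 ≠ P.C (m-1)) (h2y : q2 ≠ P.C m) (h3y : q3 ≠ P.C m) (h34 : q3 ≠ P.C (m+1))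
    (hay : P.C (m-1) ≠ P.C m)
    (hnt : P.C (m-1) ≠ q3 ∨ q2 ≠ q3) :
    Good P' (k+2) := by
  have hk2 := hG.hk
  have hIf := hG.hI
  have htail := S.R_tail hm hIf h3y h34
  refine ⟨by omega, fun i => by rw [congrFun S.hI i]; exact hIf i, ?_, ?_, ?_⟩
  · -- final simplex zero
    intro l
    by_contra hcon
    have htrue : P'.R (k+2) l = true := by simpa using hcon
    have := htail k l (by omega) htrue
    rw [hG.hS l] at this
    exact absurd this (by simp)
  · -- walls
    intro q hq1 hq2 hCeq l
    by_cases c1 : q ≤ m-2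
    · have hold : P.C q = P.C (q+1) := by
        rw [← S.hC0 q (by omega), ← S.hC0 (q+1) (by omega)]; exact hCeq
      rw [S.R_low hm (show q+1 ≤ m-1 by omega) l]
      exact hG.hW q hq1 (by omega) hold l
    · by_cases c2 : q = m-1
      · rw [c2, S.hC0 (m-1) le_rfl, show m-1+1 = m by omega, S.hCm] at hCeq
        exact absurd hCeq.symm h2x
      · by_cases c3 : q = m
        · rw [c3, S.hCm, S.hC1] at hCeq
          exact absurd hCeq h2y
        · by_cases c4 : q = m+1
          · rw [c4, S.hC1, S.hC2] at hCeq
            exact absurd hCeq.symm h3y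
          · by_cases c5 : q = m+2
            · rw [c5, S.hC2, S.hC3 (m+3) (by omega), show m+3-2 = m+1 by omega] at hCeq
              exact absurd hCeq h34
            · have hq3 : m+3 ≤ q := by omega
              have hold : P.C (q-2) = P.C (q-1) := by
                have e2 := S.hC3 (q+1) (by omega)
                rw [S.hC3 q hq3, e2, show q+1-2 = q-1 by omega] at hCeq
                exact hCeq
              have hwall := hG.hW (q-2) (by omega) (by omega)
                (by rw [show q-2+1 = q-1 by omega]; exact hold)
              rw [show q-2+1 = q-1 by omega] at hwall
              by_contra hcon
              have htrue : P'.R (q+1) l = true := by simpa using hcon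
              have := htail (q-1) l (by omega)
                (by rw [show q-1+2 = q+1 by omega]; exact htrue)
              rw [hwall l] at this
              exact absurd this (by simp)
  · -- non-mono-true
    intro j hj2 hjk
    by_cases c1 : j ≤ m-1
    · obtain ⟨l, hl⟩ := hG.hN j hj2 (by omega)
      exact ⟨l, by rw [S.R_low hm c1 l]; exact hl⟩
    · by_cases c2 : j = m
      · refine ⟨P.C (m-1), ?_⟩
        rw [c2, R_eq_of_last P' (show 1 ≤ m-1 by omega) (show m-1 ≤ m-1 by omega)
          (by rw [S.hC0 (m-1) le_rfl]) (fun q hq hq' => absurd hq (by omega))]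
        exact S.hVm1
      · by_cases c3 : j = m+1
        · refine ⟨q2, ?_⟩
          rw [c3, R_eq_of_last P' (show 1 ≤ m by omega) (show m ≤ m+1-1 by omega)
            S.hCm (fun q hq hq' => absurd hq (by omega))]
          exact S.hVm
        · by_cases c4 : j = m+2
          · refine ⟨P.C (m-1), ?_⟩
            rw [c4, R_eq_of_last P' (show 1 ≤ m-1 by omega) (show m-1 ≤ m+2-1 by omega)
              (by rw [S.hC0 (m-1) le_rfl]) ?_]
            · exact S.hVm1
            intro q hq hq' hc
            by_cases h1 : q = m
            · rw [h1, S.hCm] at hc; exact h2x hc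
            · have h2 : q = m+1 := by omega
              rw [h2, S.hC1] at hc; exact hay hc.symm
          · by_cases c5 : j = m+3
            · rcases hnt with hw | hw
              · refine ⟨P.C (m-1), ?_⟩
                rw [c5, R_eq_of_last P' (show 1 ≤ m-1 by omega) (show m-1 ≤ m+3-1 by omega)
                  (by rw [S.hC0 (m-1) le_rfl]) ?_]
                · exact S.hVm1
                intro q hq hq' hc
                by_cases h1 : q = m
                · rw [h1, S.hCm] at hc; exact h2x hc
                · by_cases h2 : q = m+1
                  · rw [h2, S.hC1] at hc; exact hay hc.symm
                  · have h3 : q = m+2 := by omega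
                    rw [h3, S.hC2] at hc; exact hw hc.symm
              · refine ⟨q2, ?_⟩
                rw [c5, R_eq_of_last P' (show 1 ≤ m by omega) (show m ≤ m+3-1 by omega)
                  S.hCm ?_]
                · exact S.hVm
                intro q hq hq' hc
                by_cases h1 : q = m+1
                · rw [h1, S.hC1] at hc; exact h2y hc.symm
                · have h2 : q = m+2 := by omega
                  rw [h2, S.hC2] at hc; exact hw hc.symm
            · obtain ⟨l, hl⟩ := hG.hN (j-2) (by omega) (by omega)
              refine ⟨l, ?_⟩
              by_contra hcon
              have htrue : P'.R j l = true := by simpa using hcon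
              have := htail (j-2) l (by omega) (by rw [show j-2+2 = j by omega]; exact htrue)
              rw [hl] at this
              exact absurd this (by simp)

lemma step_card {P P' : SPath n} {k m : ℕ} {q2 q3 : Fin (n+1)} (S : Step P P' m q2 q3)
    (hm : 2 ≤ m) (hk : m + 2 ≤ k) (hVm1 : P.V (m-1) = true) :
    (Tok P' (k+2)).card + 1 = (Tok P k).card + (if P.R m q3 = true then 1 else 0) := by
  have hcard : ∀ (W : SPath n) (K : ℕ), 1 ≤ K → (Tok W K).card
      = ∑ q ∈ Finset.Ico 1 K, (if W.V q = true then 1 else 0) := by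
    intro W K hK
    rw [Tok, Finset.card_filter, show Finset.Icc 1 (K-1) = Finset.Ico 1 K by
      ext q; simp only [Finset.mem_Icc, Finset.mem_Ico]; omega]
  rw [hcard P k (by omega), hcard P' (k+2) (by omega)]
  have hsplit1 : ∑ q ∈ Finset.Ico 1 (k+2), (if P'.V q = true then 1 else 0)
      = (∑ q ∈ Finset.Ico 1 (m-1), (if P'.V q = true then 1 else 0))
        + (∑ q ∈ Finset.Ico (m-1) (m+3), (if P'.V q = true then 1 else 0))
        + (∑ q ∈ Finset.Ico (m+3) (k+2), (if P'.V q = true then 1 else 0)) := by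
    rw [Finset.sum_Ico_consecutive _ (show 1 ≤ m-1 by omega) (show m-1 ≤ m+3 by omega),
      Finset.sum_Ico_consecutive _ (show 1 ≤ m+3 by omega) (show m+3 ≤ k+2 by omega)]
  have hsplit2 : ∑ q ∈ Finset.Ico 1 k, (if P.V q = true then 1 else 0)
      = (∑ q ∈ Finset.Ico 1 (m-1), (if P.V q = true then 1 else 0))
        + (∑ q ∈ Finset.Ico (m-1) (m+1), (if P.V q = true then 1 else 0))
        + (∑ q ∈ Finset.Ico (m+1) k, (if P.V q = true then 1 else 0)) := by
    rw [Finset.sum_Ico_consecutive _ (show 1 ≤ m-1 by omega) (show m-1 ≤ m+1 by omega),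
      Finset.sum_Ico_consecutive _ (show 1 ≤ m+1 by omega) (show m+1 ≤ k by omega)]
  have he1 : ∑ q ∈ Finset.Ico 1 (m-1), (if P'.V q = true then 1 else 0)
      = ∑ q ∈ Finset.Ico 1 (m-1), (if P.V q = true then 1 else 0) := by
    apply Finset.sum_congr rfl
    intro q hq
    simp only [Finset.mem_Ico] at hq
    rw [S.hV0 q (by omega)]
  have he2 : ∑ q ∈ Finset.Ico (m-1) (m+3), (if P'.V q = true then 1 else 0)
      = (if P.V m = true then 1 else 0) + (if P.R m q3 = true then 1 else 0) := by
    rw [show Finset.Ico (m-1) (m+3) = {m-1, m, m+1, m+2} by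
      ext q; simp only [Finset.mem_Ico, Finset.mem_insert, Finset.mem_singleton]; omega]
    rw [Finset.sum_insert (by
        simp only [Finset.mem_insert, Finset.mem_singleton]; push_neg
        refine ⟨by omega, by omega, by omega⟩),
      Finset.sum_insert (by
        simp only [Finset.mem_insert, Finset.mem_singleton]; push_neg
        exact ⟨by omega, by omega⟩),
      Finset.sum_insert (by simp only [Finset.mem_singleton]; omega),
      Finset.sum_singleton]
    simp only [S.hVm1, S.hVm, S.hV1, S.hV2]
    simp
  have he3 : ∑ q ∈ Finset.Ico (m+3) (k+2), (if P'.V q = true then 1 else 0)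
      = ∑ q ∈ Finset.Ico (m+1) k, (if P.V q = true then 1 else 0) := by
    rw [show Finset.Ico (m+3) (k+2) = (Finset.Ico (m+1) k).map (addRightEmbedding 2) by
      rw [Finset.map_add_right_Ico]]
    rw [Finset.sum_map]
    apply Finset.sum_congr rfl
    intro q hq
    simp only [Finset.mem_Ico] at hq
    have hval : P'.V (q + 2) = P.V q := by
      rw [S.hV3 (q+2) (by omega), show q+2-2 = q by omega]
    simp only [addRightEmbedding_apply, hval]
  have he4 : ∑ q ∈ Finset.Ico (m-1) (m+1), (if P.V q = true then 1 else 0)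
      = 1 + (if P.V m = true then 1 else 0) := by
    rw [show Finset.Ico (m-1) (m+1) = {m-1, m} by
      ext q; simp only [Finset.mem_Ico, Finset.mem_insert, Finset.mem_singleton]; omega]
    rw [Finset.sum_insert (by simp only [Finset.mem_singleton]; omega),
      Finset.sum_singleton]
    simp only [hVm1]
    simp
  rw [hsplit1, hsplit2, he1, he2, he3, he4]
  omega

/-- Push wrapper: full data for a push move at `m` on a true position `m-1`. -/
lemma do_push (P : SPath n) (k m : ℕ) (z : Fin (n+1)) (hn : 3 ≤ n) (hG : Good P k)
    (hm : 2 ≤ m) (hk : m + 2 ≤ k)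
    (hz : P.C (m+1) = z) (hzx : z ≠ P.C (m-1)) (hzy : z ≠ P.C m)
    (hxy : P.C (m-1) ≠ P.C m) (hVm1 : P.V (m-1) = true) :
    ∃ P', Step P P' m z (P.C (m-1)) ∧ Ext P k P' (k+2) ∧ Good P' (k+2) ∧
      (Tok P' (k+2)).card = (Tok P k).card := by
  obtain ⟨P', S, hExt⟩ := push_move P k m z hn hm hk hz hzx hzy hxy
  have hRx : P.R m (P.C (m-1)) = true := by
    rw [R_eq_of_last P (show 1 ≤ m-1 by omega) (show m-1 ≤ m-1 by omega) rfl
      (fun q hq hq' => absurd hq (by omega))]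
    exact hVm1
  have hGood := step_good S hG hm hk hzx hzy hxy (by rw [hz]; exact hzx.symm) hxy
    (Or.inr hzx)
  have hcard := step_card S hm hk hVm1
  rw [hRx] at hcard
  simp at hcard
  exact ⟨P', S, hExt, hGood, by omega⟩

/-- Abba wrapper. -/
lemma do_abba (P : SPath n) (k m : ℕ) (b : Fin (n+1)) (hn : 3 ≤ n) (hG : Good P k)
    (hm : 2 ≤ m) (hk : m + 2 ≤ k)
    (hpat : P.C (m+1) = P.C (m-1)) (hxy : P.C (m-1) ≠ P.C m)
    (hbx : b ≠ P.C (m-1)) (hby : b ≠ P.C m) (hVm1 : P.V (m-1) = true) :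
    ∃ P', Step P P' m b b ∧ Ext P k P' (k+2) ∧ Good P' (k+2) ∧
      (Tok P' (k+2)).card + 1 = (Tok P k).card + (if P.R m b = true then 1 else 0) := by
  obtain ⟨P', S, hExt⟩ := abba_move P k m b hn hm hk hpat hxy hbx hby
  have hGood := step_good S hG hm hk hbx hby hby (by rw [hpat]; exact hbx) hxy
    (Or.inl hbx.symm)
  exact ⟨P', S, hExt, hGood, step_card S hm hk hVm1⟩

/-- The walk: a true token at `p` with a free corridor to the next occurrence `Pt` of
its colour can be transported there and killed. -/
lemma walk (hn : 3 ≤ n) : ∀ d : ℕ, ∀ (P : SPath n) (k p Pt : ℕ), Good P k → Pt = p + d →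
    1 ≤ p → Pt ≤ k - 1 → p + 3 ≤ Pt →
    P.V p = true → P.C Pt = P.C p →
    (∀ q, p < q → q < Pt → P.C q ≠ P.C p) →
    (∀ q, p < q → q < Pt → P.V q = false) →
    ∃ P' k', Ext P k P' k' ∧ Good P' k' ∧ (Tok P' k').card + 1 = (Tok P k).card := by
  intro d
  induction d using Nat.strong_induction_on with
  | _ d IH =>
  intro P k p Pt hG hd hp hPt hdist hVp hCPt hfree hF
  have hRp1x : P.R (p+1) (P.C p) = true := by
    rw [R_eq_of_last P hp (show p ≤ p+1-1 by omega) rfl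
      (fun q hq hq' => absurd hq (by omega))]
    exact hVp
  have hyx : P.C (p+1) ≠ P.C p := by
    intro h
    have hwall := hG.hW p hp (by omega) h.symm
    rw [hwall (P.C p)] at hRp1x
    exact absurd hRp1x (by simp)
  have hzx : P.C (p+2) ≠ P.C p := hfree (p+2) (by omega) (by omega)
  have hzy : P.C (p+2) ≠ P.C (p+1) := by
    intro h
    have hwall := hG.hW (p+1) (by omega) (by omega) h.symm
    have hRx : P.R (p+2) (P.C p) = true := by
      rw [R_eq_of_last P hp (show p ≤ p+2-1 by omega) rfl ?_]
      · exact hVp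
      intro q hq hq' hc
      exact hyx (by rw [show q = p+1 by omega] at hc; exact hc)
    rw [hwall (P.C p)] at hRx
    exact absurd hRx (by simp)
  -- the push at m = p+1
  have hm : 2 ≤ p+1 := by omega
  have hk : (p+1) + 2 ≤ k := by omega
  obtain ⟨P₁, S, hExt₁, hGood₁, hcard₁⟩ := do_push P k (p+1) (P.C (p+2)) hn hG hm hk
    rfl hzx hzy (fun h => hyx h.symm) hVp
  -- new state facts
  have hC1p3 : P₁.C (p+3) = P.C p := S.hC2
  have hV1p3 : P₁.V (p+3) = true := by
    rw [S.hV2]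
    exact hRp1x
  have hC1high : ∀ j, p+4 ≤ j → P₁.C j = P.C (j-2) := fun j hj => S.hC3 j (by omega)
  have hV1high : ∀ j, p+4 ≤ j → P₁.V j = P.V (j-2) := fun j hj => S.hV3 j (by omega)
  have hC1Pt : P₁.C (Pt+2) = P.C p := by
    rw [hC1high (Pt+2) (by omega), show Pt+2-2 = Pt by omega]
    exact hCPt
  by_cases hd3 : d = 3
  · -- kill next to the target
    have hPt3 : Pt = p + 3 := by omega
    have hC1p4 : P₁.C (p+4) = P.C (p+2) := by
      rw [hC1high (p+4) (by omega), show p+4-2 = p+2 by omega]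
    have hC1p5 : P₁.C (p+5) = P.C p := by
      have h5 := hC1Pt
      rw [hPt3] at h5
      exact h5
    have hR1y : P₁.R (p+4) (P.C (p+1)) = false := by
      rw [R_eq_of_last P₁ (show 1 ≤ p+2 by omega) (show p+2 ≤ p+4-1 by omega)
        (show P₁.C (p+2) = P.C (p+1) from S.hC1) ?_]
      · rw [S.hV1]
        exact hF (p+1) (by omega) (by omega)
      intro q hq hq' hc
      rw [show q = p+3 by omega, hC1p3] at hc
      exact hyx hc.symm
    obtain ⟨P₂, S₂, hExt₂, hGood₂, hcard₂⟩ := do_abba P₁ (k+2) (p+4) (P.C (p+1)) hn hGood₁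
      (by omega) (by omega)
      (show P₁.C (p+4+1) = P₁.C (p+4-1) by
        rw [show p+4+1 = p+5 from rfl, hC1p5, show p+4-1 = p+3 from rfl, hC1p3])
      (show P₁.C (p+4-1) ≠ P₁.C (p+4) by
        rw [show p+4-1 = p+3 from rfl, hC1p3, hC1p4]; exact fun h => hzx h.symm)
      (show P.C (p+1) ≠ P₁.C (p+4-1) by
        rw [show p+4-1 = p+3 from rfl, hC1p3]; exact hyx)
      (show P.C (p+1) ≠ P₁.C (p+4) by
        rw [hC1p4]; exact fun h => hzy h.symm)
      (show P₁.V (p+4-1) = true from hV1p3)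
    rw [hR1y] at hcard₂
    simp at hcard₂
    refine ⟨P₂, k+2+2, hExt₁.comp hExt₂, hGood₂, by omega⟩
  · -- recurse
    have hd4 : 4 ≤ d := by omega
    obtain ⟨P₂, k₂, hExt₂, hGood₂, hcard₂⟩ := IH (d-1) (by omega) P₁ (k+2) (p+3) (Pt+2)
      hGood₁ (by omega) (by omega) (by omega) (by omega) hV1p3
      (by rw [hC1Pt, hC1p3])
      (fun q hq hq' => by
        rw [hC1p3, hC1high q (by omega)]
        exact hfree (q-2) (by omega) (by omega))
      (fun q hq hq' => by
        rw [hV1high q (by omega)]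
        exact hF (q-2) (by omega) (by omega))
    exact ⟨P₂, k₂, hExt₁.comp hExt₂, hGood₂, by omega⟩

/-- Resolution of a blocked distance-2 token, by descending along the two-coloured
chain below it. -/
lemma descent (hn : 3 ≤ n) : ∀ p : ℕ, ∀ (P : SPath n) (k : ℕ), Good P k →
    1 ≤ p → p + 2 ≤ k - 1 → P.V p = true →
    P.C (p+1) ≠ P.C p → P.C (p+2) = P.C p →
    (∀ b, b ≠ P.C p → b ≠ P.C (p+1) → P.R (p+1) b = true) →
    ∃ P' k', Ext P k P' k' ∧ Good P' k' ∧ (Tok P' k').card + 1 = (Tok P k).card := by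
  intro p
  induction p using Nat.strong_induction_on with
  | _ p IH =>
  intro P k hG hp hpk hVp hyx hpat hblocked
  have hRpx : P.R (p+1) (P.C p) = true := by
    rw [R_eq_of_last P hp (show p ≤ p+1-1 by omega) rfl
      (fun q hq hq' => absurd hq (by omega))]
    exact hVp
  rcases Nat.lt_or_ge p 2 with h1 | hp2
  · -- base p = 1 : contradiction, blocked colours have no occurrence
    exfalso
    obtain rfl : p = 1 := by omega
    obtain ⟨b, hb1, hb2, _⟩ := exists_notin3 hn (P.C 1) (P.C 2) (P.C 2)
    have hbt := hblocked b hb1 hb2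
    rw [R_eq_I P (fun q hq1 hq2 => by
      rw [show q = 1 by omega]; exact fun h => hb1 h.symm)] at hbt
    rw [hG.hI b] at hbt
    exact absurd hbt (by simp)
  · -- p ≥ 2
    by_cases hgx : P.C (p-1) = P.C p
    · -- wall directly below: contradiction
      exfalso
      have hwall := hG.hW (p-1) (by omega) (by omega)
        (by rw [show p-1+1 = p by omega]; exact hgx)
      rw [show p-1+1 = p by omega] at hwall
      obtain ⟨b, hb1, hb2, _⟩ := exists_notin3 hn (P.C p) (P.C (p+1)) (P.C (p+1))
      have hbt := hblocked b hb1 hb2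
      rw [R_eq_R_of_no_occ P (show p ≤ p+1 by omega) (fun q hq hq' hc => by
        rw [show q = p by omega] at hc; exact hb1 hc.symm), hwall b] at hbt
      exact absurd hbt (by simp)
    · by_cases hgy : P.C (p-1) = P.C (p+1)
      · by_cases hVg : P.V (p-1) = true
        · -- contradiction with non-mono-true
          exfalso
          have hRy : P.R (p+1) (P.C (p+1)) = true := by
            rw [R_eq_of_last P (show 1 ≤ p-1 by omega) (show p-1 ≤ p+1-1 by omega) hgy
              (fun q hq hq' hc => by
                rw [show q = p by omega] at hc; exact hyx hc.symm)]
            exact hVg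
          obtain ⟨l, hl⟩ := hG.hN (p+1) (by omega) (by omega)
          by_cases hlx : l = P.C p
          · rw [hlx, hRpx] at hl; exact absurd hl (by simp)
          · by_cases hly : l = P.C (p+1)
            · rw [hly, hRy] at hl; exact absurd hl (by simp)
            · rw [hblocked l hlx hly] at hl; exact absurd hl (by simp)
        · -- corridor scan below p
          have hVg' : P.V (p-1) = false := by
            cases h : P.V (p-1)
            · rfl
            · exact absurd h hVg
          -- inner downward induction
          have scan : ∀ r : ℕ, 1 ≤ r → r ≤ p-1 →
              (∀ q, r ≤ q → q ≤ p-1 → P.V q = false) →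
              (∀ q, r ≤ q → q ≤ p-1 → (P.C q = P.C p ∨ P.C q = P.C (p+1))) →
              (∀ q, r ≤ q → q ≤ p-1 → P.C q ≠ P.C (q+1)) →
              ∃ P' k', Ext P k P' k' ∧ Good P' k' ∧ (Tok P' k').card + 1 = (Tok P k).card := by
            intro r
            induction r using Nat.strong_induction_on with
            | _ r IHr =>
            intro hr1 hrp hcV hcB hcA
            rcases Nat.lt_or_ge r 2 with hrr | hr2
            · -- r = 1 : no occurrence of a blocked colour at all
              exfalso
              obtain rfl : r = 1 := by omega
              obtain ⟨b, hb1, hb2, _⟩ := exists_notin3 hn (P.C p) (P.C (p+1)) (P.C (p+1))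
              have hbt := hblocked b hb1 hb2
              rw [R_eq_I P (fun q hq1 hq2 hc => by
                rcases Nat.lt_or_ge q p with hqp | hqp
                · rcases hcB q (by omega) (by omega) with h | h
                  · exact hb1 (by rw [← hc, h])
                  · exact hb2 (by rw [← hc, h])
                · rw [show q = p by omega] at hc
                  exact hb1 hc.symm)] at hbt
              rw [hG.hI b] at hbt
              exact absurd hbt (by simp)
            · -- r ≥ 2 : look at position r-1
              by_cases hδc : P.C (r-1) = P.C r
              · -- wall inside the corridor: contradiction
                exfalso
                have hwall := hG.hW (r-1) (by omega) (by omega)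
                  (by rw [show r-1+1 = r by omega]; exact hδc)
                rw [show r-1+1 = r by omega] at hwall
                obtain ⟨b, hb1, hb2, _⟩ := exists_notin3 hn (P.C p) (P.C (p+1)) (P.C (p+1))
                have hbt := hblocked b hb1 hb2
                rw [R_eq_R_of_no_occ P (show r ≤ p+1 by omega) (fun q hq hq' hc => by
                  rcases Nat.lt_or_ge q p with hqp | hqp
                  · rcases hcB q (by omega) (by omega) with h | h
                    · exact hb1 (by rw [← hc, h])
                    · exact hb2 (by rw [← hc, h])
                  · rw [show q = p by omega] at hc
                    exact hb1 hc.symm), hwall b] at hbt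
                exact absurd hbt (by simp)
              · by_cases hδm : P.C (r-1) = P.C p ∨ P.C (r-1) = P.C (p+1)
                · -- position r-1 carries a corridor colour
                  by_cases hVr : P.V (r-1) = true
                  · -- a blocked chain token further down: outer recursion
                    have hCr1 : P.C (r+1) = P.C p ∨ P.C (r+1) = P.C (p+1) := by
                      rcases Nat.lt_or_ge (r+1) p with h | h
                      · exact hcB (r+1) (by omega) (by omega)
                      · rw [show r+1 = p by omega]
                        exact Or.inl rfl
                    have hCrm : P.C r = P.C p ∨ P.C r = P.C (p+1) :=
                      hcB r (by omega) (by omega)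
                    have hArr : P.C r ≠ P.C (r+1) := by
                      rcases Nat.lt_or_ge (r+1) p with h | h
                      · exact hcA r (by omega) (by omega)
                      · rw [show r+1 = p by omega]
                        rw [show r = p-1 by omega] at hδc ⊢
                        -- C (p-1) ≠ C p
                        intro hc
                        exact hgx hc
                    have hpat' : P.C (r+1) = P.C (r-1) := by
                      rcases hCrm with h3 | h3
                      · rcases hδm with h1 | h1
                        · exact absurd (h1.trans h3.symm) hδc
                        · rcases hCr1 with h2 | h2
                          · exact absurd (h3.trans h2.symm) hArr
                          · rw [h1, h2]
                      · rcases hδm with h1 | h1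
                        · rcases hCr1 with h2 | h2
                          · rw [h1, h2]
                          · exact absurd (h3.trans h2.symm) hArr
                        · exact absurd (h1.trans h3.symm) hδc
                    have hblocked2 : ∀ b, b ≠ P.C (r-1) → b ≠ P.C (r-1+1) → P.R (r-1+1) b = true := by
                      intro b hb1 hb2
                      rw [show r-1+1 = r by omega] at hb2 ⊢
                      have hbxy : b ≠ P.C p ∧ b ≠ P.C (p+1) := by
                        rcases hδm with h1 | h1 <;> rcases hCrm with h3 | h3
                        · exact absurd (h1.trans h3.symm) hδc
                        · exact ⟨by rw [← h1]; exact hb1, by rw [← h3]; exact hb2⟩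
                        · exact ⟨by rw [← h3]; exact hb2, by rw [← h1]; exact hb1⟩
                        · exact absurd (h1.trans h3.symm) hδc
                      rw [← R_eq_R_of_no_occ P (show r ≤ p+1 by omega) (fun q hq hq' hc => by
                        rcases Nat.lt_or_ge q p with hqp | hqp
                        · rcases hcB q (by omega) (by omega) with h | h
                          · exact hbxy.1 (by rw [← hc, h])
                          · exact hbxy.2 (by rw [← hc, h])
                        · rw [show q = p by omega] at hc
                          exact hbxy.1 hc.symm)]
                      exact hblocked b hbxy.1 hbxy.2
                    exact IH (r-1) (by omega) P k hG (by omega) (by omega) hVr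
                      (by rw [show r-1+1 = r by omega]; exact fun h => hδc h.symm)
                      (by rw [show r-1+2 = r+1 by omega]; exact hpat')
                      hblocked2
                  · -- extend the corridor downwards
                    have hVr' : P.V (r-1) = false := by
                      cases h : P.V (r-1)
                      · rfl
                      · exact absurd h hVr
                    apply IHr (r-1) (by omega) (by omega) (by omega)
                    · intro q hq hq'
                      rcases Nat.lt_or_ge q r with h | h
                      · rw [show q = r-1 by omega]; exact hVr'
                      · exact hcV q h hq'
                    · intro q hq hq'
                      rcases Nat.lt_or_ge q r with h | h
                      · rw [show q = r-1 by omega]; exact hδm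
                      · exact hcB q h hq'
                    · intro q hq hq'
                      rcases Nat.lt_or_ge q r with h | h
                      · rw [show q = r-1 by omega, show r-1+1 = r by omega]; exact hδc
                      · exact hcA q h hq'
                · -- position r-1 carries a blocked colour
                  push_neg at hδm
                  by_cases hVr : P.V (r-1) = true
                  · -- distant M3 followed by a walk
                    have hRd : P.R (p+1) (P.C (r-1)) = true := by
                      rw [R_eq_of_last P (show 1 ≤ r-1 by omega) (show r-1 ≤ p+1-1 by omega) rfl
                        (fun q hq hq' hc => by
                          rcases Nat.lt_or_ge q p with hqp | hqp
                          · rcases hcB q (by omega) (by omega) with h | h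
                            · exact hδm.1 (by rw [← hc, h])
                            · exact hδm.2 (by rw [← hc, h])
                          · rw [show q = p by omega] at hc
                            exact hδm.1 hc.symm)]
                      exact hVr
                    obtain ⟨P₁, S₁, hExt₁, hGood₁, hcard₁⟩ := do_abba P k (p+1) (P.C (r-1)) hn hG
                      (by omega) (by omega)
                      (show P.C (p+1+1) = P.C (p+1-1) from hpat)
                      (show P.C (p+1-1) ≠ P.C (p+1) from fun h => hyx h.symm)
                      (show P.C (r-1) ≠ P.C (p+1-1) from hδm.1)
                      (show P.C (r-1) ≠ P.C (p+1) from hδm.2)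
                      (show P.V (p+1-1) = true from hVp)
                    rw [hRd] at hcard₁
                    simp at hcard₁
                    have hC1 : ∀ j, j ≤ p → P₁.C j = P.C j := fun j hj => S₁.hC0 j (by omega)
                    have hV1 : ∀ j, j ≤ p-1 → P₁.V j = P.V j := fun j hj => S₁.hV0 j (by omega)
                    have hC1p1 : P₁.C (p+1) = P.C (r-1) := S₁.hCm
                    have hV1p : P₁.V p = false := S₁.hVm1
                    obtain ⟨P₂, k₂, hExt₂, hGood₂, hcard₂⟩ := walk hn (p+1-(r-1)) P₁ (k+2) (r-1) (p+1)
                      hGood₁ (by omega) (by omega) (by omega) (by omega)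
                      (by rw [hV1 (r-1) (by omega)]; exact hVr)
                      (by rw [hC1p1, hC1 (r-1) (by omega)])
                      (fun q hq hq' => by
                        rw [hC1 (r-1) (by omega)]
                        rcases Nat.lt_or_ge q p with hqp | hqp
                        · rw [hC1 q (by omega)]
                          rcases hcB q (by omega) (by omega) with h | h
                          · rw [h]; exact fun hc => hδm.1 hc.symm
                          · rw [h]; exact fun hc => hδm.2 hc.symm
                        · rw [show q = p by omega, hC1 p le_rfl]
                          exact fun hc => hδm.1 hc.symm)
                      (fun q hq hq' => by
                        rcases Nat.lt_or_ge q p with hqp | hqp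
                        · rw [hV1 q (by omega)]
                          exact hcV q (by omega) (by omega)
                        · rw [show q = p by omega]
                          exact hV1p)
                    exact ⟨P₂, k₂, hExt₁.comp hExt₂, hGood₂, by omega⟩
                  · -- blocked colour with a false last occurrence : contradiction
                    exfalso
                    have hbt := hblocked (P.C (r-1)) hδm.1 hδm.2
                    rw [R_eq_of_last P (show 1 ≤ r-1 by omega) (show r-1 ≤ p+1-1 by omega) rfl
                      (fun q hq hq' hc => by
                        rcases Nat.lt_or_ge q p with hqp | hqp
                        · rcases hcB q (by omega) (by omega) with h | h
                          · exact hδm.1 (by rw [← hc, h])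
                          · exact hδm.2 (by rw [← hc, h])
                        · rw [show q = p by omega] at hc
                          exact hδm.1 hc.symm)] at hbt
                    cases h : P.V (r-1)
                    · rw [h] at hbt; exact absurd hbt (by simp)
                    · exact hVr h
          apply scan (p-1) (by omega) (by omega)
          · intro q hq hq'
            rw [show q = p-1 by omega]
            exact hVg'
          · intro q hq hq'
            rw [show q = p-1 by omega]
            exact Or.inr hgy
          · intro q hq hq'
            rw [show q = p-1 by omega, show p-1+1 = p by omega]
            intro hc
            exact hgx hc
      · -- position p-1 carries a blocked colour
        by_cases hVg : P.V (p-1) = true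
        · -- M3 followed by an adjacent kill
          have hRyF : P.R (p+1) (P.C (p+1)) = false := by
            obtain ⟨l, hl⟩ := hG.hN (p+1) (by omega) (by omega)
            by_cases hlx : l = P.C p
            · exfalso; rw [hlx, hRpx] at hl; exact absurd hl (by simp)
            · by_cases hly : l = P.C (p+1)
              · rw [← hly]; exact hl
              · exfalso; rw [hblocked l hlx hly] at hl; exact absurd hl (by simp)
          have hRg : P.R (p+1) (P.C (p-1)) = true := by
            rw [R_eq_of_last P (show 1 ≤ p-1 by omega) (show p-1 ≤ p+1-1 by omega) rfl
              (fun q hq hq' hc => by rw [show q = p by omega] at hc; exact hgx hc.symm)]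
            exact hVg
          obtain ⟨P₁, S₁, hExt₁, hGood₁, hcard₁⟩ := do_abba P k (p+1) (P.C (p-1)) hn hG
            (by omega) (by omega)
            (show P.C (p+1+1) = P.C (p+1-1) from hpat)
            (show P.C (p+1-1) ≠ P.C (p+1) from fun h => hyx h.symm)
            (show P.C (p-1) ≠ P.C (p+1-1) from hgx)
            (show P.C (p-1) ≠ P.C (p+1) from hgy)
            (show P.V (p+1-1) = true from hVp)
          rw [hRg] at hcard₁
          simp at hcard₁
          have hC1pm1 : P₁.C (p-1) = P.C (p-1) := S₁.hC0 (p-1) (by omega)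
          have hC1p : P₁.C p = P.C p := S₁.hC0 p (by omega)
          have hC1p1 : P₁.C (p+1) = P.C (p-1) := S₁.hCm
          have hV1pm1 : P₁.V (p-1) = true := by
            rw [S₁.hV0 (p-1) (by omega)]
            exact hVg
          have hR1y : P₁.R p (P.C (p+1)) = false := by
            rw [S₁.R_low (show 2 ≤ p+1 by omega) (show p ≤ p+1-1 by omega)]
            rw [← R_eq_R_of_no_occ P (show p ≤ p+1 by omega) (fun q hq hq' hc => by
              rw [show q = p by omega] at hc; exact hyx hc.symm)]
            exact hRyF
          obtain ⟨P₂, S₂, hExt₂, hGood₂, hcard₂⟩ := do_abba P₁ (k+2) p (P.C (p+1)) hn hGood₁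
            (by omega) (by omega)
            (show P₁.C (p+1) = P₁.C (p-1) by rw [hC1p1, hC1pm1])
            (show P₁.C (p-1) ≠ P₁.C p by rw [hC1pm1, hC1p]; exact hgx)
            (show P.C (p+1) ≠ P₁.C (p-1) by rw [hC1pm1]; exact fun h => hgy h.symm)
            (show P.C (p+1) ≠ P₁.C p by rw [hC1p]; exact hyx)
            hV1pm1
          rw [hR1y] at hcard₂
          simp at hcard₂
          exact ⟨P₂, k+2+2, hExt₁.comp hExt₂, hGood₂, by omega⟩
        · -- contradiction
          exfalso
          have hbt := hblocked (P.C (p-1)) hgx hgy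
          rw [R_eq_of_last P (show 1 ≤ p-1 by omega) (show p-1 ≤ p+1-1 by omega) rfl
            (fun q hq hq' hc => by
              rw [show q = p by omega] at hc
              exact hgx hc.symm)] at hbt
          cases h : P.V (p-1)
          · rw [h] at hbt; exact absurd hbt (by simp)
          · exact hVg h

/-- Main induction: every good state reduces to a zero path. -/
lemma good_reducible (hn : 3 ≤ n) : ∀ N : ℕ, ∀ (P : SPath n) (k : ℕ), Good P k →
    (Tok P k).card = N → ∃ P' k', Ext P k P' k' ∧ IsZeroPath P' k' := by
  intro N
  induction N using Nat.strong_induction_on with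
  | _ N IH =>
  intro P k hG hN
  rcases Nat.eq_zero_or_pos N with h0 | hpos
  · have hemp : Tok P k = ∅ := Finset.card_eq_zero.mp (by rw [hN, h0])
    refine ⟨P, k, fun Z z h => h, hG.hI, ?_⟩
    intro j hj1 hj2
    by_contra hcon
    have hj : j ∈ Tok P k := by
      simp only [Tok, Finset.mem_filter, Finset.mem_Icc]
      refine ⟨⟨hj1, by omega⟩, ?_⟩
      cases h : P.V j
      · exact absurd h hcon
      · rfl
    rw [hemp] at hj
    exact absurd hj (Finset.notMem_empty j)
  · have hne : (Tok P k).Nonempty := Finset.card_pos.mp (by omega)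
    have hpmem := (Tok P k).max'_mem hne
    set p := (Tok P k).max' hne with hpdef
    simp only [Tok, Finset.mem_filter, Finset.mem_Icc] at hpmem
    obtain ⟨⟨hp1, hpk⟩, hVp⟩ := hpmem
    have hright : ∀ q, p < q → q ≤ k-1 → P.V q = false := by
      intro q hq hq'
      cases h : P.V q
      · rfl
      · exfalso
        have hmem : q ∈ Tok P k := by
          simp only [Tok, Finset.mem_filter, Finset.mem_Icc]
          exact ⟨⟨by omega, hq'⟩, h⟩
        have := Finset.le_max' _ q hmem
        omega
    have hRk : P.R k (P.C p) = false := hG.hS (P.C p)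
    have hp2 : p + 1 ≤ k - 1 := by
      by_contra hcon
      have heq := R_eq_of_last P hp1 (show p ≤ k-1 by omega) rfl
        (fun q hq hq' => absurd hq (by omega))
      rw [heq, hVp] at hRk
      exact absurd hRk (by simp)
    have hRp1 : P.R (p+1) (P.C p) = true := by
      rw [R_eq_of_last P hp1 (show p ≤ p+1-1 by omega) rfl
        (fun q hq hq' => absurd hq (by omega))]
      exact hVp
    have hSne : ((Finset.Icc (p+1) (k-1)).filter (fun q => P.C q = P.C p)).Nonempty := by
      by_contra hcon
      rw [Finset.not_nonempty_iff_eq_empty] at hcon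
      have hno : ∀ q, p+1 ≤ q → q ≤ k-1 → P.C q ≠ P.C p := by
        intro q hq hq' hc
        have hmem : q ∈ (Finset.Icc (p+1) (k-1)).filter (fun q => P.C q = P.C p) := by
          simp only [Finset.mem_filter, Finset.mem_Icc]
          exact ⟨⟨hq, hq'⟩, hc⟩
        rw [hcon] at hmem
        exact absurd hmem (Finset.notMem_empty q)
      rw [R_eq_R_of_no_occ P (show p+1 ≤ k by omega)
        (fun q hq hq' => hno q hq (by omega)), hRp1] at hRk
      exact absurd hRk (by simp)
    have hPtmem := Finset.min'_mem _ hSne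
    set Pt := ((Finset.Icc (p+1) (k-1)).filter (fun q => P.C q = P.C p)).min' hSne with hPtdef
    simp only [Finset.mem_filter, Finset.mem_Icc] at hPtmem
    obtain ⟨⟨hPt1, hPt2⟩, hPtc⟩ := hPtmem
    have hPtmin : ∀ q, p+1 ≤ q → q < Pt → P.C q ≠ P.C p := by
      intro q hq hq' hc
      have hmem : q ∈ (Finset.Icc (p+1) (k-1)).filter (fun q => P.C q = P.C p) := by
        simp only [Finset.mem_filter, Finset.mem_Icc]
        exact ⟨⟨hq, by omega⟩, hc⟩
      have := Finset.min'_le _ q hmem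
      omega
    have hPtp2 : p+2 ≤ Pt := by
      by_contra hcon
      have hPte : Pt = p+1 := by omega
      have hwall := hG.hW p hp1 hp2 (by rw [← hPte] at *; exact hPtc.symm)
      rw [hwall (P.C p)] at hRp1
      exact absurd hRp1 (by simp)
    by_cases hPt3 : p + 3 ≤ Pt
    · obtain ⟨P', k', hExt, hGood', hcard⟩ := walk hn (Pt - p) P k p Pt hG (by omega)
        hp1 hPt2 hPt3 hVp hPtc
        (fun q hq hq' => hPtmin q (by omega) hq')
        (fun q hq hq' => hright q hq (by omega))
      obtain ⟨P'', k'', hExt2, hzero⟩ := IH ((Tok P' k').card) (by omega) P' k' hGood' rfl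
      exact ⟨P'', k'', hExt.comp hExt2, hzero⟩
    · have hPte : Pt = p+2 := by omega
      have hpat : P.C (p+2) = P.C p := by rw [← hPte]; exact hPtc
      have hyx : P.C (p+1) ≠ P.C p := hPtmin (p+1) le_rfl (by omega)
      by_cases hsp : ∃ b, b ≠ P.C p ∧ b ≠ P.C (p+1) ∧ P.R (p+1) b = false
      · obtain ⟨b, hb1, hb2, hb3⟩ := hsp
        obtain ⟨P₁, S₁, hExt₁, hGood₁, hcard₁⟩ := do_abba P k (p+1) b hn hG (by omega) (by omega)
          (show P.C (p+1+1) = P.C (p+1-1) from hpat)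
          (show P.C (p+1-1) ≠ P.C (p+1) from fun h => hyx h.symm)
          hb1 hb2 hVp
        rw [hb3] at hcard₁
        simp at hcard₁
        obtain ⟨P'', k'', hExt2, hzero⟩ := IH ((Tok P₁ (k+2)).card) (by omega) P₁ (k+2) hGood₁ rfl
        exact ⟨P'', k'', hExt₁.comp hExt2, hzero⟩
      · push_neg at hsp
        have hblocked : ∀ b, b ≠ P.C p → b ≠ P.C (p+1) → P.R (p+1) b = true := by
          intro b h1 h2
          cases h : P.R (p+1) b
          · exact absurd h (hsp b h1 h2)
          · rfl
        obtain ⟨P', k', hExt, hGood', hcard⟩ := descent hn p P k hG hp1 (by omega) hVp hyx hpat hblocked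
        obtain ⟨P'', k'', hExt2, hzero⟩ := IH ((Tok P' k').card) (by omega) P' k' hGood' rfl
        exact ⟨P'', k'', hExt.comp hExt2, hzero⟩

/-- Transfer of the simplex sequence along subpaths. -/
lemma sub_R (P : SPath n) (a : ℕ) (ha : 1 ≤ a) (j : ℕ) (hj : 1 ≤ j) (i : Fin (n+1)) :
    (P.sub a).R j i = P.R (a - 1 + j) i := by
  rcases R_elim (P.sub a) j i with ⟨h1, h2⟩ | ⟨q0, hq1, hq2, hqc, hqv, hqlast⟩
  · rw [h1]
    show P.R a i = P.R (a - 1 + j) i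
    refine (R_eq_R_of_no_occ P (show a ≤ a - 1 + j by omega) ?_).symm
    intro q hq hq' hc
    apply h2 (q - (a-1)) (by omega) (by omega)
    show P.C (a - 1 + (q - (a-1))) = i
    rw [show a - 1 + (q - (a-1)) = q by omega]
    exact hc
  · rw [hqv]
    show P.V (a - 1 + q0) = P.R (a - 1 + j) i
    refine (R_eq_of_last P (show 1 ≤ a - 1 + q0 by omega)
      (show a - 1 + q0 ≤ (a - 1 + j) - 1 by omega) hqc ?_).symm
    intro q hq hq' hc
    apply hqlast (q - (a-1)) (by omega) (by omega)
    show P.C (a - 1 + (q - (a-1))) = i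
    rw [show a - 1 + (q - (a-1)) = q by omega]
    exact hc

/-- An admissible path is a good state. -/
lemma admissible_good {P : SPath n} {k : ℕ} (hP : P.Admissible k) : Good P k := by
  obtain ⟨r, a, hr, ha0, har, hmono, hatom⟩ := hP
  have hmono' : ∀ t, t ≤ r → ∀ s, s ≤ t → a s ≤ a t := by
    intro t
    induction t with
    | zero => intro _ s hs; rw [Nat.le_zero.mp hs]
    | succ t iht =>
      intro htr s hs
      rcases Nat.lt_or_ge s (t+1) with h | h
      · exact le_trans (iht (by omega) s (by omega)) (le_of_lt (hmono t (by omega)))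
      · rw [show s = t+1 by omega]
  have hlen : ∀ s, s < r → 2 ≤ a (s+1) - a s := fun s hs => (hatom s hs).2.2.1
  have F2 : ∀ s, s < r → ∀ i, P.R (a s + 1) i = false := by
    intro s hs i
    have h4 := (hatom s hs).2.2.2.1 i
    rw [R_eq_I (P.sub (a s + 1)) (fun q hq1 hq2 => absurd hq1 (by omega))] at h4
    exact h4
  have F3 : ∀ s, s < r → ∀ i, P.R (a (s+1)) i = false := by
    intro s hs i
    have h5 := (hatom s hs).2.2.2.2.1 i
    rw [sub_R P (a s + 1) (by omega) (a (s+1) - a s) (by have := hlen s hs; omega) i,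
      show (a s + 1) - 1 + (a (s+1) - a s) = a (s+1) by
        have := hmono s hs; omega] at h5
    exact h5
  have hk : 2 ≤ k := by
    have h1 := hlen 0 (by omega)
    rw [show (0:ℕ)+1 = 1 from rfl, ha0] at h1
    have h2 := hmono' r le_rfl 1 hr
    rw [har] at h2
    omega
  have locate : ∀ q, 1 ≤ q → q ≤ k → ∃ s, s < r ∧ a s < q ∧ q ≤ a (s+1) := by
    intro q hq1 hq2
    have hne : ((Finset.range r).filter (fun s => a s < q)).Nonempty := by
      refine ⟨0, ?_⟩
      simp only [Finset.mem_filter, Finset.mem_range]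
      exact ⟨by omega, by rw [ha0]; omega⟩
    have hmem := Finset.max'_mem _ hne
    set s0 := ((Finset.range r).filter (fun s => a s < q)).max' hne with hs0
    simp only [Finset.mem_filter, Finset.mem_range] at hmem
    refine ⟨s0, hmem.1, hmem.2, ?_⟩
    by_cases h : s0 + 1 = r
    · rw [h, har]; exact hq2
    · by_contra hcon
      push_neg at hcon
      have hmem2 : s0+1 ∈ (Finset.range r).filter (fun s => a s < q) := by
        simp only [Finset.mem_filter, Finset.mem_range]
        have := hmem.1
        exact ⟨by omega, by omega⟩
      have := Finset.le_max' _ _ hmem2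
      omega
  refine ⟨hk, ?_, ?_, ?_, ?_⟩
  · -- initial simplex zero
    intro i
    have h2 := F2 0 (by omega) i
    rw [ha0] at h2
    rw [R_eq_I P (fun q hq1 hq2 => absurd hq1 (by omega))] at h2
    exact h2
  · -- final simplex zero
    intro l
    have h3 := F3 (r-1) (by omega) l
    rw [show r-1+1 = r by omega, har] at h3
    exact h3
  · -- walls
    intro q hq1 hq2 hCeq l
    obtain ⟨s, hsr, hsa, hsb⟩ := locate q hq1 (by omega)
    by_cases hcase : q + 1 ≤ a (s+1) - 1
    · exfalso
      have hnb := (hatom s hsr).1 (q - a s) (by omega)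
        (by have := hmono s hsr; omega)
      apply hnb
      show P.C (a s + 1 - 1 + (q - a s)) = P.C (a s + 1 - 1 + (q - a s + 1))
      rw [show a s + 1 - 1 + (q - a s) = q by omega,
        show a s + 1 - 1 + (q - a s + 1) = q + 1 by omega]
      exact hCeq
    · have hbd : q + 1 = a (s+1) ∨ q + 1 = a (s+1) + 1 := by omega
      rcases hbd with h | h
      · rw [h]; exact F3 s hsr l
      · rw [h]
        refine F2 (s+1) ?_ l
        by_contra hcon
        have hsr' : s + 1 = r := by omega
        rw [hsr', har] at h
        omega
  · -- non-mono-true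
    intro j hj2 hjk
    obtain ⟨s, hsr, hsa, hsb⟩ := locate j (by omega) (by omega)
    by_cases h1 : j = a s + 1
    · exact ⟨0, by rw [h1]; exact F2 s hsr 0⟩
    · by_cases h2 : j = a (s+1)
      · exact ⟨0, by rw [h2]; exact F3 s hsr 0⟩
      · have hmol := (hatom s hsr).2.2.2.2.2 (j - a s) (by omega) (by omega)
        by_contra hcon
        push_neg at hcon
        apply hmol
        refine ⟨true, fun i => ?_⟩
        rw [sub_R P (a s + 1) (by omega) (j - a s) (by omega) i,
          show (a s + 1) - 1 + (j - a s) = j by omega]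
        cases h : P.R j i
        · exact absurd h (hcon i)
        · rfl

end SPath
/-- every admissible path of dimension `n ≥ 3` is reducible: a finite
sequence of exhaustive vertex and edge expansions transforms it into a `0`-path. -/
theorem admissible_reducible (n k : ℕ) (hn : 3 ≤ n) (P : SPath n)
    (hP : P.Admissible k) :
    P.Reducible k := by
  have hG := SPath.admissible_good hP
  obtain ⟨P', k', hExt, hzero⟩ := SPath.good_reducible hn ((SPath.Tok P k).card) P k hG rfl
  exact ⟨P', k', hExt P' k' (SPath.Reduces.refl P' k'), hzero⟩
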